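/- arXiv:1510.01657 — 4 statements merged into one kernel-verified Lean document; each statement's English description precedes it below -/
import Mathlib

section
/- Hermite reciprocity: for all nonnegative integers p and q, the p-th symmetric power of the q-th symmetric power of ℂ² is isomorphic as a GL(2,ℂ)-representation (equivalently, has the same character) to the q-th symmetric power of the p-th symmetric power of ℂ². In terms of characters: the complete homogeneous symmetric evaluation h_p(x^q, x^{q-1}y, ..., y^q) equals h_q(x^p, x^{p-1}y, ..., y^p) as polynomials in x, y. -/
/-!
Write `H p q = h_p(x^q, x^(q-1) y, …, y^q)`. Splitting off the first variable `x^(q+1)` of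
`H (p+1) (q+1)` gives the Pascal-type recurrence
`H (p+1) (q+1) = x^(q+1) H p (q+1) + y^(p+1) H (p+1) q`, and reversing the order of the
variables shows that `H` is symmetric in `x` and `y`, which gives the mirrored recurrence with
`x` and `y` exchanged. So `H p q` and `H q p` satisfy the same recurrence with the same boundary
values `1`, and agree by induction.
-/

/-- The complete homogeneous symmetric evaluation `h_n(θ_0, …, θ_{k-1})`:
the sum of all monomials of total degree `n` in the values `θ i`. -/
noncomputable def hfull {R : Type*} [CommSemiring R] (k n : ℕ) (θ : Fin k → R) : R :=
  ∑ f ∈ Finset.Nat.antidiagonalTuple k n, ∏ i, θ i ^ f i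

open Finset

section CompleteHomogeneous

variable {R : Type*} [CommSemiring R]

theorem hfull_zero_right (k : ℕ) (θ : Fin k → R) : hfull k 0 θ = 1 := by
  simp [hfull, Nat.antidiagonalTuple_zero_right]

theorem hfull_one_left (n : ℕ) (θ : Fin 1 → R) : hfull 1 n θ = θ 0 ^ n := by
  simp [hfull]

theorem hfull_const_mul (k n : ℕ) (c : R) (θ : Fin k → R) :
    hfull k n (fun i => c * θ i) = c ^ n * hfull k n θ := by
  rw [hfull, hfull, mul_sum]
  refine sum_congr rfl fun f hf => ?_
  rw [Nat.mem_antidiagonalTuple] at hf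
  simp_rw [mul_pow, prod_mul_distrib, prod_pow_eq_pow_sum, hf]

theorem hfull_comp_perm (k n : ℕ) (θ : Fin k → R) (σ : Equiv.Perm (Fin k)) :
    hfull k n (θ ∘ σ) = hfull k n θ := by
  refine sum_nbij' (· ∘ σ.symm) (· ∘ σ) (fun f hf => ?_) (fun f hf => ?_)
    (fun f _ => by simp [Function.comp_assoc]) (fun f _ => by simp [Function.comp_assoc])
    (fun f _ => ?_)
  · simpa [Nat.mem_antidiagonalTuple, Equiv.sum_comp σ.symm f] using hf
  · simpa [Nat.mem_antidiagonalTuple, Equiv.sum_comp σ f] using hf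
  · exact (Equiv.prod_comp σ.symm _).symm.trans (by simp)

theorem hfull_succ (k n : ℕ) (θ : Fin (k + 1) → R) :
    hfull (k + 1) n θ = ∑ ab ∈ antidiagonal n, θ 0 ^ ab.1 * hfull k ab.2 (Fin.tail θ) := by
  have hval : (Nat.antidiagonalTuple (k + 1) n).val = (antidiagonal n).val.bind
      fun ab => (Nat.antidiagonalTuple k ab.2).val.map (Fin.cons ab.1) :=
    -- the recursive definition of `antidiagonalTuple`, transported from lists to multisets
    (Multiset.coe_bind _ _).symm
  simp only [hfull, sum_eq_multiset_sum, hval, Multiset.map_bind, Multiset.sum_bind,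
    Multiset.map_map, Fin.prod_univ_succ, Function.comp_def, Fin.cons_zero, Fin.cons_succ,
    Multiset.sum_map_mul_left, Fin.tail]

theorem hfull_succ_succ (k n : ℕ) (θ : Fin (k + 1) → R) :
    hfull (k + 1) (n + 1) θ = θ 0 * hfull (k + 1) n θ + hfull k (n + 1) (Fin.tail θ) := by
  rw [hfull_succ, hfull_succ, Nat.sum_antidiagonal_succ, mul_sum, add_comm]
  simp only [pow_zero, one_mul, pow_succ', mul_assoc]

end CompleteHomogeneous

section SymSymChar

variable {R : Type*} [CommSemiring R] (x y : R)

/-- The character of `Sym^p (Sym^q ℂ²)` at `diag(x, y)`. -/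
noncomputable def symSymChar (p q : ℕ) : R :=
  hfull (q + 1) p fun i => x ^ (q - i : ℕ) * y ^ (i : ℕ)

theorem symSymChar_zero_left (q : ℕ) : symSymChar x y 0 q = 1 :=
  hfull_zero_right _ _

theorem symSymChar_zero_right (p : ℕ) : symSymChar x y p 0 = 1 := by
  simp [symSymChar, hfull_one_left]

theorem symSymChar_swap (p q : ℕ) : symSymChar y x p q = symSymChar x y p q := by
  rw [symSymChar, symSymChar, ← hfull_comp_perm _ _ _ Fin.revPerm]
  congr 1
  funext i
  have hi := i.is_le
  simp only [Function.comp_apply, Fin.revPerm_apply, Fin.val_rev]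
  rw [mul_comm, show q + 1 - (i + 1) = q - i by omega, show q - (q - i) = (i : ℕ) by omega]

theorem symSymChar_succ_succ (p q : ℕ) :
    symSymChar x y (p + 1) (q + 1) =
      x ^ (q + 1) * symSymChar x y p (q + 1) + y ^ (p + 1) * symSymChar x y (p + 1) q := by
  have htail : Fin.tail (fun i : Fin (q + 2) => x ^ (q + 1 - i : ℕ) * y ^ (i : ℕ)) =
      fun i : Fin (q + 1) => y * (x ^ (q - i : ℕ) * y ^ (i : ℕ)) := by
    funext i
    simp only [Fin.tail, Fin.val_succ, Nat.add_sub_add_right, pow_succ]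
    ring
  rw [symSymChar, hfull_succ_succ, htail, hfull_const_mul]
  simp [symSymChar]

theorem symSymChar_comm (p q : ℕ) : symSymChar x y p q = symSymChar x y q p := by
  induction p generalizing q with
  | zero => rw [symSymChar_zero_left, symSymChar_zero_right]
  | succ p ihp =>
    induction q with
    | zero => rw [symSymChar_zero_left, symSymChar_zero_right]
    | succ q ihq =>
      calc symSymChar x y (p + 1) (q + 1)
          = x ^ (q + 1) * symSymChar x y p (q + 1) + y ^ (p + 1) * symSymChar x y (p + 1) q :=
            symSymChar_succ_succ x y p q
        _ = y ^ (p + 1) * symSymChar x y q (p + 1) + x ^ (q + 1) * symSymChar x y (q + 1) p := by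
            rw [ihp, ihq, add_comm]
        _ = symSymChar y x (q + 1) (p + 1) := by
            rw [symSymChar_succ_succ, symSymChar_swap x y, symSymChar_swap x y]
        _ = symSymChar x y (q + 1) (p + 1) := symSymChar_swap x y _ _

end SymSymChar

/-- Hermite reciprocity in character form:
`h_p(x^q, x^{q-1}y, …, y^q) = h_q(x^p, x^{p-1}y, …, y^p)` in `ℤ[x,y]`. -/
theorem hermite_reciprocity (p q : ℕ) :
    hfull (q + 1) p
      (fun i => (MvPolynomial.X 0 : MvPolynomial (Fin 2) ℤ) ^ (q - (i : ℕ)) *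
        MvPolynomial.X 1 ^ (i : ℕ)) =
    hfull (p + 1) q
      (fun i => (MvPolynomial.X 0 : MvPolynomial (Fin 2) ℤ) ^ (p - (i : ℕ)) *
        MvPolynomial.X 1 ^ (i : ℕ)) :=
  symSymChar_comm _ _ p q
end

section
/- Let λ, μ be partitions with at most d+1 and e+1 parts respectively, where d, e ≥ 0. If P^d_λ(q) = P^e_μ(q) as rational functions, then |λ|·d - |μ|·e is even. -/
/-- The transpose (conjugate) partition: `λᵗ_j = #{i < N : λ_i > j}` (0-indexed),
for a partition `l` supported on indices `< N`. -/
def conj (l : ℕ → ℕ) (N : ℕ) : ℕ → ℕ := fun j => ((Finset.range N).filter fun i => j < l i).card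

/-- The boxes `(i, j)` (0-indexed) of the Young diagram of `l` (with `l` antitone
and supported on indices `< N`, so all columns are `< l 0`). -/
def boxes (l : ℕ → ℕ) (N : ℕ) : Finset (ℕ × ℕ) :=
  (Finset.range N ×ˢ Finset.range (l 0)).filter fun p => p.2 < l p.1

/-- The hook length of the (0-indexed) box `(i, j)`:
`(λ_i - 1 - j) + (λᵗ_j - 1 - i) + 1`. -/
def hook (l : ℕ → ℕ) (N i j : ℕ) : ℕ := (l i - 1 - j) + (conj l N j - 1 - i) + 1

/-- The `q`-analog `[a]_t = 1 + t + ⋯ + t^{a-1}`, evaluated at `t ∈ ℚ(q)`. -/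
noncomputable def qv (t : RatFunc ℚ) (a : ℕ) : RatFunc ℚ := ∑ i ∈ Finset.range a, t ^ i

/-- `|λ| = Σ λ_i`, the size of the partition. -/
def psize (l : ℕ → ℕ) (N : ℕ) : ℕ := ∑ i ∈ Finset.range N, l i

/-- `b(λ) = Σ_i (i-1)λ_i` (1-indexed), i.e. `Σ_i i·λ_i` with 0-indexing. -/
def bsum (l : ℕ → ℕ) (N : ℕ) : ℕ := ∑ i ∈ Finset.range N, i * l i

/-- The hook-content ratio `P^d_λ(t) = ∏_{u∈Y(λ)} [d+1+c(u)]_t / ∏_{u∈Y(λ)} [h(u)]_t`,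
where `c(i,j) = j - i` is the content (so `d+1+c(u) = d+1+j-i` in `ℕ`), evaluated
at `t ∈ ℚ(q)`. -/
noncomputable def Pt (l : ℕ → ℕ) (N d : ℕ) (t : RatFunc ℚ) : RatFunc ℚ :=
  (∏ p ∈ boxes l N, qv t (d + 1 + p.2 - p.1)) /
  (∏ p ∈ boxes l N, qv t (hook l N p.1 p.2))

/-- `P^d_λ(q)` as a rational function in `q`. -/
noncomputable def Pq (l : ℕ → ℕ) (N d : ℕ) : RatFunc ℚ := Pt l N d RatFunc.X



/-!
The degree in `q` of `P^d_λ(q)` is `d|λ| - 2 b(λ)`, so it determines the parity of `d|λ|`.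
Indeed `[a]_q` has degree `a - 1`, so the numerator contributes `Σ_u (d + j - i)` over the boxes
`u = (i, j)`, while `Σ_u (h(u) - 1) = Σ_u (i + j)`: within a row the arm lengths run through the
same values as the column indices, and within a column the leg lengths through the row indices.
-/

open Finset Polynomial

lemma Polynomial.natDegree_geom_sum_X {R : Type*} [CommRing R] [Nontrivial R] {n : ℕ}
    (hn : n ≠ 0) : (∑ i ∈ range n, (X : R[X]) ^ i).natDegree = n - 1 := by
  have h := congrArg natDegree (geom_sum_mul (X : R[X]) n)
  rw [← C_1, (monic_geom_sum_X hn).natDegree_mul (monic_X_sub_C 1), natDegree_X_sub_C,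
    natDegree_X_pow_sub_C] at h
  omega

lemma RatFunc.intDegree_prod {K ι : Type*} [Field K] {s : Finset ι} {f : ι → RatFunc K}
    (hf : ∀ i ∈ s, f i ≠ 0) : (∏ i ∈ s, f i).intDegree = ∑ i ∈ s, (f i).intDegree := by
  induction s using Finset.cons_induction with
  | empty => simp
  | cons a s _ ih =>
    rw [prod_cons, sum_cons, intDegree_mul (hf a (mem_cons_self a s))
      (prod_ne_zero_iff.mpr fun i hi => hf i (mem_cons_of_mem hi)),
      ih fun i hi => hf i (mem_cons_of_mem hi)]

lemma qv_X_eq_algebraMap (a : ℕ) :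
    qv RatFunc.X a = algebraMap ℚ[X] (RatFunc ℚ) (∑ i ∈ range a, X ^ i) := by
  simp [qv, RatFunc.algebraMap_X]

lemma qv_X_ne_zero {a : ℕ} (ha : a ≠ 0) : qv RatFunc.X a ≠ 0 := by
  rw [qv_X_eq_algebraMap]
  exact RatFunc.algebraMap_ne_zero (monic_geom_sum_X ha).ne_zero

lemma intDegree_qv_X {a : ℕ} (ha : a ≠ 0) : (qv RatFunc.X a).intDegree = (a : ℤ) - 1 := by
  rw [qv_X_eq_algebraMap, RatFunc.intDegree_polynomial, natDegree_geom_sum_X ha]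
  omega

lemma Finset.filter_range_eq_range_card {p : ℕ → Prop} [DecidablePred p]
    (hp : ∀ ⦃i k⦄, k ≤ i → p i → p k) (N : ℕ) :
    (range N).filter p = range ((range N).filter p).card := by
  induction N with
  | zero => simp
  | succ N ih =>
    rw [range_add_one, filter_insert]
    by_cases hN : p N
    · have hall : (range N).filter p = range N :=
        filter_true_of_mem fun i hi => hp (mem_range.mp hi).le hN
      simp [hN, hall, range_add_one]
    · simpa [hN] using ih

section YoungDiagram

variable {l : ℕ → ℕ} {N : ℕ}

lemma mem_boxes (hl : Antitone l) {p : ℕ × ℕ} : p ∈ boxes l N ↔ p.1 < N ∧ p.2 < l p.1 := by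
  simp only [boxes, mem_filter, mem_product, mem_range]
  have := hl (Nat.zero_le p.1)
  omega

lemma filter_range_eq_range_conj (hl : Antitone l) (j : ℕ) :
    (range N).filter (fun i => j < l i) = range (conj l N j) :=
  filter_range_eq_range_card (fun _ _ hki hi => hi.trans_le (hl hki)) N

lemma sum_boxes_eq_sum_rows {M : Type*} [AddCommMonoid M] (hl : Antitone l) (f : ℕ × ℕ → M) :
    ∑ p ∈ boxes l N, f p = ∑ i ∈ range N, ∑ j ∈ range (l i), f (i, j) :=
  sum_finset_product _ _ _ fun p => by simp [mem_boxes hl]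

lemma sum_boxes_eq_sum_cols {M : Type*} [AddCommMonoid M] (hl : Antitone l) (f : ℕ × ℕ → M) :
    ∑ p ∈ boxes l N, f p = ∑ j ∈ range (l 0), ∑ i ∈ range (conj l N j), f (i, j) := by
  rw [boxes, sum_filter, sum_product_right]
  refine sum_congr rfl fun j _ => ?_
  rw [← sum_filter, filter_range_eq_range_conj hl]

lemma card_boxes (hl : Antitone l) : #(boxes l N) = psize l N := by
  rw [card_eq_sum_ones, sum_boxes_eq_sum_rows hl]
  simp [psize]

lemma sum_boxes_fst (hl : Antitone l) : ∑ p ∈ boxes l N, p.1 = bsum l N := by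
  simp [sum_boxes_eq_sum_rows hl, bsum, mul_comm]

lemma sum_boxes_hook (hl : Antitone l) :
    ∑ p ∈ boxes l N, hook l N p.1 p.2 = ∑ p ∈ boxes l N, (p.1 + p.2 + 1) := by
  have harm : ∑ p ∈ boxes l N, (l p.1 - 1 - p.2) = ∑ p ∈ boxes l N, p.2 := by
    simp only [sum_boxes_eq_sum_rows hl]
    exact sum_congr rfl fun i _ => sum_range_reflect id (l i)
  have hleg : ∑ p ∈ boxes l N, (conj l N p.2 - 1 - p.1) = ∑ p ∈ boxes l N, p.1 := by
    simp only [sum_boxes_eq_sum_cols hl]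
    exact sum_congr rfl fun j _ => sum_range_reflect id (conj l N j)
  simp only [hook, sum_add_distrib, harm, hleg]
  ring

theorem intDegree_Pq {d : ℕ} (hl : Antitone l) (hN : N ≤ d + 1) :
    (Pq l N d).intDegree = (psize l N : ℤ) * d - 2 * bsum l N := by
  have hcontent : ∀ p ∈ boxes l N, d + 1 + p.2 - p.1 ≠ 0 := fun p hp => by
    have := (mem_boxes hl).mp hp
    omega
  have hhook : ∀ p ∈ boxes l N, hook l N p.1 p.2 ≠ 0 := fun p _ => by simp [hook]
  have hnum : ∑ p ∈ boxes l N, (((d + 1 + p.2 - p.1 : ℕ) : ℤ) - 1)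
      = ∑ p ∈ boxes l N, ((d : ℤ) + p.2 - p.1) := sum_congr rfl fun p hp => by
    have := (mem_boxes hl).mp hp
    omega
  have hden : ∑ p ∈ boxes l N, ((hook l N p.1 p.2 : ℤ) - 1)
      = ∑ p ∈ boxes l N, ((p.1 : ℤ) + p.2) := by
    rw [sum_sub_distrib, ← Nat.cast_sum, sum_boxes_hook hl]
    push_cast
    simp [sum_add_distrib]
  rw [Pq, Pt,
    RatFunc.intDegree_div (prod_ne_zero_iff.mpr fun p hp => qv_X_ne_zero (hcontent p hp))
      (prod_ne_zero_iff.mpr fun p hp => qv_X_ne_zero (hhook p hp)),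
    RatFunc.intDegree_prod fun p hp => qv_X_ne_zero (hcontent p hp),
    RatFunc.intDegree_prod fun p hp => qv_X_ne_zero (hhook p hp),
    sum_congr rfl fun p hp => intDegree_qv_X (hcontent p hp),
    sum_congr rfl fun p hp => intDegree_qv_X (hhook p hp), hnum, hden, ← sum_sub_distrib,
    ← card_boxes hl, ← sum_boxes_fst hl]
  push_cast
  rw [mul_sum, card_eq_sum_ones, Nat.cast_sum, sum_mul, ← sum_sub_distrib]
  exact sum_congr rfl fun p _ => by ring

end YoungDiagram

theorem P_eq_parity_general (d e : ℕ) (l m : ℕ → ℕ) (hl : Antitone l) (hm : Antitone m)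
    (hP : Pq l (d + 1) d = Pq m (e + 1) e) :
    Even ((psize l (d + 1) : ℤ) * d - (psize m (e + 1) : ℤ) * e) := by
  have hdeg := congrArg RatFunc.intDegree hP
  rw [intDegree_Pq hl le_rfl, intDegree_Pq hm le_rfl] at hdeg
  exact ⟨bsum l (d + 1) - bsum m (e + 1), by linarith⟩

/-- If `λ`, `μ` are partitions with at most `d+1` and `e+1` parts and
`P^d_λ(q) = P^e_μ(q)` as rational functions, then `|λ|·d - |μ|·e` is even. -/
theorem P_eq_parity (d e : ℕ) (l m : ℕ → ℕ) (hl : Antitone l) (hm : Antitone m)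
    (h0l : l (d + 1) = 0) (h0m : m (e + 1) = 0)
    (hP : Pq l (d + 1) d = Pq m (e + 1) e) :
    Even ((psize l (d + 1) : ℤ) * d - (psize m (e + 1) : ℤ) * e) :=
  P_eq_parity_general d e l m hl hm hP
end

section
/- Cayley–Sylvester / Manivel symmetry for one step: for positive integers u, v, z, the Laurent polynomial s_λ(x^{w}, x^{w-2}, ..., x^{-w}) with λ = (z^v) (the v×z rectangle) and w = u+v-1 is symmetric under any permutation of (u, v, z). -/
/-- The rectangular partition `(z^v)`: `v` parts equal to `z`. -/
def rect (v z : ℕ) : ℕ → ℕ := fun i => if i < v then z else 0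

section Aux

lemma qv_ne_zero {n : ℕ} (hn : 0 < n) : qv (RatFunc.X) n ≠ 0 := by
  have h : qv (RatFunc.X) n =
      algebraMap (Polynomial ℚ) (RatFunc ℚ) (∑ i ∈ Finset.range n, Polynomial.X ^ i) := by
    simp [qv, map_sum, map_pow, RatFunc.algebraMap_X]
  rw [h]
  rw [ne_eq, FaithfulSMul.algebraMap_eq_zero_iff]
  intro hc
  have := congrArg (Polynomial.eval 1) hc
  simp at this
  omega

lemma telescope (m u : ℕ) :
    (∏ k ∈ Finset.range u, qv RatFunc.X (m+k+2)) / (∏ k ∈ Finset.range u, qv RatFunc.X (m+k+1))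
      = qv RatFunc.X (m+u+1) / qv RatFunc.X (m+1) := by
  have h1 := Finset.prod_range_succ (fun k => qv RatFunc.X (m+k+1)) u
  have h2 := Finset.prod_range_succ' (fun k => qv RatFunc.X (m+k+1)) u
  simp only [show ∀ k, m+(k+1)+1 = m+k+2 from fun k => by omega] at h2
  rw [div_eq_div_iff (Finset.prod_ne_zero_iff.2 fun k _ => qv_ne_zero (by omega))
    (qv_ne_zero (by omega))]
  rw [mul_comm] at h2 ⊢
  rw [← h2, h1, mul_comm]

/-- The manifestly symmetric triple product (MacMahon box product form). -/
noncomputable def T (a b c : ℕ) : RatFunc ℚ :=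
  ∏ i ∈ Finset.range a, ∏ j ∈ Finset.range b, ∏ k ∈ Finset.range c,
    qv RatFunc.X (i+j+k+2) / qv RatFunc.X (i+j+k+1)

lemma T_swap01 (a b c : ℕ) : T a b c = T b a c := by
  unfold T
  rw [Finset.prod_comm]
  refine Finset.prod_congr rfl fun j _ => Finset.prod_congr rfl fun i _ =>
    Finset.prod_congr rfl fun k _ => by rw [show j+i+k = i+j+k from by omega]

lemma T_swap12 (a b c : ℕ) : T a b c = T a c b := by
  unfold T
  refine Finset.prod_congr rfl fun i _ => ?_
  rw [Finset.prod_comm]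
  refine Finset.prod_congr rfl fun k _ => Finset.prod_congr rfl fun j _ => by
    rw [show i+k+j = i+j+k from by omega]

lemma T_rot (a b c : ℕ) : T a b c = T b c a := by
  rw [T_swap01, T_swap12]

lemma T_eq (v z u : ℕ) :
    T v z u = (∏ i ∈ Finset.range v, ∏ j ∈ Finset.range z, qv RatFunc.X (i+j+u+1)) /
      (∏ i ∈ Finset.range v, ∏ j ∈ Finset.range z, qv RatFunc.X (i+j+1)) := by
  unfold T
  rw [← Finset.prod_div_distrib]
  refine Finset.prod_congr rfl fun i _ => ?_
  rw [← Finset.prod_div_distrib]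
  refine Finset.prod_congr rfl fun j _ => ?_
  rw [Finset.prod_div_distrib]
  exact telescope (i+j) u

lemma boxes_rect {v z : ℕ} (hv : 0 < v) :
    boxes (rect v z) v = Finset.range v ×ˢ Finset.range z := by
  unfold boxes rect
  rw [if_pos hv]
  refine Finset.filter_true_of_mem fun p hp => ?_
  rw [Finset.mem_product, Finset.mem_range, Finset.mem_range] at hp
  simpa [hp.1] using hp.2

lemma conj_rect {v z j : ℕ} (hj : j < z) : conj (rect v z) v j = v := by
  unfold conj rect
  rw [Finset.filter_true_of_mem fun i hi => by
    rw [Finset.mem_range] at hi; simpa [hi] using hj]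
  exact Finset.card_range v

lemma Pq_rect (u v z : ℕ) (hu : 0 < u) (hv : 0 < v) :
    Pq (rect v z) v (u + v - 1) = T u v z := by
  rw [show T u v z = T v z u from by rw [T_rot, T_swap01], T_eq]
  unfold Pq Pt
  rw [boxes_rect hv, Finset.prod_product, Finset.prod_product]
  congr 1
  · rw [← Finset.prod_range_reflect (fun i => ∏ j ∈ Finset.range z, qv RatFunc.X (i+j+u+1)) v]
    refine Finset.prod_congr rfl fun i hi => Finset.prod_congr rfl fun j hj => ?_
    rw [Finset.mem_range] at hi hj
    congr 1
    omega
  · rw [← Finset.prod_range_reflect (fun i => ∏ j ∈ Finset.range z, qv RatFunc.X (i+j+1)) v]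
    refine Finset.prod_congr rfl fun i hi => ?_
    rw [← Finset.prod_range_reflect (fun j => qv RatFunc.X ((v-1-i)+j+1)) z]
    refine Finset.prod_congr rfl fun j hj => ?_
    rw [Finset.mem_range] at hi hj
    simp only [hook, conj_rect hj, rect, if_pos hi]
    congr 1
    omega

end Aux

/-- Manivel / Cayley–Sylvester symmetry, one-step case: for positive integers
`u, v, z`, the hook-content ratio `P^{u+v-1}_{(z^v)}(q)` is a symmetric function
of the triple `(u, v, z)`, i.e. invariant under every permutation. -/
theorem P_rect_symmetric (w : Fin 3 → ℕ) (hw : ∀ i, 0 < w i) (σ : Equiv.Perm (Fin 3)) :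
    Pq (rect (w (σ 1)) (w (σ 2))) (w (σ 1)) (w (σ 0) + w (σ 1) - 1) =
    Pq (rect (w 1) (w 2)) (w 1) (w 0 + w 1 - 1) := by
  rw [Pq_rect (w (σ 0)) (w (σ 1)) (w (σ 2)) (hw _) (hw _),
    Pq_rect (w 0) (w 1) (w 2) (hw _) (hw _)]
  have tri : ∀ x : Fin 3, x = 0 ∨ x = 1 ∨ x = 2 := by decide
  rcases tri (σ 0) with h0|h0|h0 <;> rcases tri (σ 1) with h1|h1|h1 <;>
      rcases tri (σ 2) with h2|h2|h2 <;>
    first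
      | exact absurd (σ.injective (h0.trans h1.symm)) (by decide)
      | exact absurd (σ.injective (h0.trans h2.symm)) (by decide)
      | exact absurd (σ.injective (h1.trans h2.symm)) (by decide)
      | (rw [h0, h1, h2]
         try first
          | rfl
          | exact T_swap01 _ _ _
          | exact T_swap12 _ _ _
          | exact T_rot _ _ _
          | exact (T_rot _ _ _).trans (T_rot _ _ _)
          | exact (T_rot _ _ _).trans (T_swap01 _ _ _))
end

section
/- Two-step reciprocity chain (n=1 even case, full): for positive integers u,v,z the three hook-content ratios coincide: P^{u+v+z-1}_{((v+z)^v, v^u)}(q) = P^{v+2z-1}_{((u+v)^v, v^z)}(q) = P^{2v+z-1}_{((u+z)^v, u^v)}(q). -/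
/-- The two-step staircase partition `(a^p, b^r)`: `p` parts equal to `a`
followed by `r` parts equal to `b` (with `a ≥ b`). -/
def twostep (a : ℕ) (p : ℕ) (b : ℕ) (r : ℕ) : ℕ → ℕ :=
  fun i => if i < p then a else if i < p + r then b else 0

/-!
For a two-step partition `(a^p, b^r)` both products in `P^d_λ` split into rectangles of boxes
on which, after reflecting the rows (contents) or rows and columns (hooks), the factor at box
`(i, j)` is `[x + i + j]` for a constant `x`. A product `rectProd F x m n` of this shape is
symmetric in `m, n` and concatenates in `n`. With `v` rows throughout, the numerators of the first
two ratios are two splittings of the same block of columns `z + 1, …, u + v + 2z`, and their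
denominators agree. Splitting the numerators further, the third ratio and this common value
become the same quotient once each cancels one nonzero block.
-/

open Finset

variable {M : Type*} [CommMonoid M]

def rectProd (F : ℕ → M) (x m n : ℕ) : M :=
  ∏ i ∈ range m, ∏ j ∈ range n, F (x + i + j)

theorem rectProd_comm (F : ℕ → M) (x m n : ℕ) : rectProd F x m n = rectProd F x n m := by
  unfold rectProd
  rw [prod_comm]
  refine prod_congr rfl fun j _ => prod_congr rfl fun i _ => ?_
  rw [add_right_comm]

theorem rectProd_add (F : ℕ → M) (x m n₁ n₂ : ℕ) :
    rectProd F x m (n₁ + n₂) = rectProd F x m n₁ * rectProd F (x + n₁) m n₂ := by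
  unfold rectProd
  rw [← prod_mul_distrib]
  refine prod_congr rfl fun i _ => ?_
  rw [prod_range_add]
  congr 1
  exact prod_congr rfl fun j _ => congrArg F (by ring)

theorem prod_range_prod_range_eq_rectProd {F : ℕ → M} {g : ℕ → ℕ → M} {x m n : ℕ}
    (h : ∀ i < m, ∀ j < n, g (m - 1 - i) (n - 1 - j) = F (x + i + j)) :
    ∏ i ∈ range m, ∏ j ∈ range n, g i j = rectProd F x m n := by
  rw [← prod_range_reflect]
  refine prod_congr rfl fun i hi => ?_
  rw [← prod_range_reflect]
  exact prod_congr rfl fun j hj => h i (mem_range.1 hi) j (mem_range.1 hj)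

section Twostep

variable {b c p r : ℕ}

theorem prod_boxes_twostep (f : ℕ × ℕ → M) :
    ∏ x ∈ boxes (twostep (b + c) p b r) (p + r), f x =
      (∏ i ∈ range p, ∏ j ∈ range (b + c), f (i, j)) *
        ∏ i ∈ range r, ∏ j ∈ range b, f (p + i, j) := by
  have hboxes : boxes (twostep (b + c) p b r) (p + r) =
      (range (p + r) ×ˢ range (b + c)).filter fun x => x.2 < twostep (b + c) p b r x.1 := by
    ext ⟨i, j⟩
    rw [boxes, mem_filter, mem_filter]
    simp only [mem_product, mem_range, twostep]
    split_ifs <;> omega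
  rw [hboxes, prod_filter, prod_product, prod_range_add]
  congr 1
  · refine prod_congr rfl fun i hi => prod_congr rfl fun j hj => if_pos ?_
    rw [mem_range] at hi hj
    simpa [twostep, hi] using hj
  · refine prod_congr rfl fun i hi => ?_
    have hrow : twostep (b + c) p b r (p + i) = b := by
      simp only [mem_range] at hi
      simp [twostep, hi]
    rw [prod_range_add, ← mul_one (∏ j ∈ range b, f (p + i, j))]
    congr 1
    · exact prod_congr rfl fun j hj => if_pos (by simpa [hrow] using hj)
    · exact prod_eq_one fun k _ => if_neg (by simp [hrow])

theorem conj_twostep {j : ℕ} (hj : j < b + c) :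
    conj (twostep (b + c) p b r) (p + r) j = if j < b then p + r else p := by
  have hfilter : (range (p + r)).filter (fun i => j < twostep (b + c) p b r i) =
      range (if j < b then p + r else p) := by
    ext i
    rw [mem_filter]
    simp only [mem_range, twostep]
    split_ifs <;> omega
  rw [conj, hfilter, card_range]

theorem hook_twostep {i j : ℕ} (hi : i < p + r) (hj : j < b + c) :
    hook (twostep (b + c) p b r) (p + r) i j =
      (if i < p then b + c else b) - 1 - j + ((if j < b then p + r else p) - 1 - i) + 1 := by
  rw [hook, conj_twostep hj, twostep]
  simp only [hi]
  split_ifs <;> omega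

theorem prod_content_twostep (F : ℕ → M) {d x : ℕ}
    (hd : d + 2 = x + p + r) :
    ∏ y ∈ boxes (twostep (b + c) p b r) (p + r), F (d + 1 + y.2 - y.1) =
      rectProd F (x + r) p (b + c) * rectProd F x r b := by
  rw [prod_boxes_twostep]
  congr 1 <;> rw [rectProd, ← prod_range_reflect] <;>
    exact prod_congr rfl fun i hi => prod_congr rfl fun j _ =>
      congrArg F (by simp only [mem_range] at hi; omega)

theorem prod_hook_twostep (F : ℕ → M) :
    ∏ y ∈ boxes (twostep (b + c) p b r) (p + r),
        F (hook (twostep (b + c) p b r) (p + r) y.1 y.2) =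
      rectProd F (c + r + 1) p b * rectProd F 1 p c * rectProd F 1 r b := by
  simp only [prod_boxes_twostep, prod_range_add _ b c, prod_mul_distrib]
  refine congrArg₂ (· * ·) (congrArg₂ (· * ·) ?_ ?_) ?_ <;>
    apply prod_range_prod_range_eq_rectProd <;> intro i hi j hj <;>
    rw [hook_twostep (by omega) (by omega)] <;> split_ifs <;> congr 1 <;> omega

end Twostep

theorem Pt_twostep {a b c p r d x : ℕ} (ha : a = b + c) (hd : d + 2 = x + p + r)
    (t : RatFunc ℚ) :
    Pt (twostep a p b r) (p + r) d t =
      rectProd (qv t) (x + r) p a * rectProd (qv t) x r b /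
        (rectProd (qv t) (c + r + 1) p b * rectProd (qv t) 1 p c * rectProd (qv t) 1 r b) := by
  subst ha
  rw [Pt, prod_content_twostep _ hd, prod_hook_twostep]

theorem qv_X_ne_zero_s15 {n : ℕ} (hn : 0 < n) : qv RatFunc.X n ≠ 0 := by
  have hpoly : qv RatFunc.X n =
      algebraMap (Polynomial ℚ) (RatFunc ℚ) (∑ i ∈ range n, Polynomial.X ^ i) := by
    simp [qv, RatFunc.algebraMap_X]
  rw [hpoly]
  exact RatFunc.algebraMap_ne_zero fun h => hn.ne' (by simpa using congrArg (Polynomial.eval 1) h)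

theorem rectProd_qv_X_ne_zero {x : ℕ} (hx : 0 < x) (m n : ℕ) :
    rectProd (qv RatFunc.X) x m n ≠ 0 :=
  prod_ne_zero_iff.2 fun _ _ => prod_ne_zero_iff.2 fun _ _ => qv_X_ne_zero_s15 (by omega)

noncomputable def reciprocityChainValue (u v z : ℕ) : RatFunc ℚ :=
  rectProd (qv RatFunc.X) (z + 1) v (u + v + z) /
    (rectProd (qv RatFunc.X) (u + z + 1) v v * rectProd (qv RatFunc.X) 1 v u *
      rectProd (qv RatFunc.X) 1 v z)

theorem Pq_chain_left {u v z : ℕ} (hv : 0 < v) :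
    Pq (twostep (v + z) v v u) (v + u) (u + v + z - 1) = reciprocityChainValue u v z := by
  rw [Pq, Pt_twostep (c := z) (x := z + 1) rfl (by omega), reciprocityChainValue,
    rectProd_comm _ _ u v, mul_comm, ← rectProd_add, rectProd_comm _ 1 u v]
  ring_nf

theorem Pq_chain_middle {u v z : ℕ} (hv : 0 < v) :
    Pq (twostep (u + v) v v z) (v + z) (v + 2 * z - 1) = reciprocityChainValue u v z := by
  rw [Pq, Pt_twostep (c := u) (x := z + 1) (add_comm u v) (by omega), reciprocityChainValue,
    rectProd_comm _ _ z v, mul_comm, ← rectProd_add, rectProd_comm _ 1 z v]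
  ring_nf

theorem Pq_chain_right {u v z : ℕ} (hv : 0 < v) :
    Pq (twostep (u + z) v u v) (2 * v) (2 * v + z - 1) = reciprocityChainValue u v z := by
  rw [Pq, two_mul, Pt_twostep (c := z) (x := z + 1) rfl (by omega), reciprocityChainValue,
    div_eq_div_iff (by simp [rectProd_qv_X_ne_zero]) (by simp [rectProd_qv_X_ne_zero]),
    rectProd_add _ _ v u z, rectProd_add _ _ v (u + v) z, rectProd_add _ _ v u v]
  ring_nf

theorem twostep_reciprocity_chain_general (u v z : ℕ) (hv : 0 < v) :
    Pq (twostep (v + z) v v u) (v + u) (u + v + z - 1) =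
      Pq (twostep (u + v) v v z) (v + z) (v + 2 * z - 1) ∧
    Pq (twostep (u + v) v v z) (v + z) (v + 2 * z - 1) =
      Pq (twostep (u + z) v u v) (2 * v) (2 * v + z - 1) := by
  rw [Pq_chain_left hv, Pq_chain_middle hv, Pq_chain_right hv]
  exact ⟨rfl, rfl⟩

/-- Two-step reciprocity chain (n = 1, even case, full): for positive integers
`u, v, z`, `P^{u+v+z-1}_{((v+z)^v, v^u)}(q) = P^{v+2z-1}_{((u+v)^v, v^z)}(q)
= P^{2v+z-1}_{((u+z)^v, u^v)}(q)`. -/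
theorem twostep_reciprocity_chain (u v z : ℕ) (hu : 0 < u) (hv : 0 < v) (hz : 0 < z) :
    Pq (twostep (v + z) v v u) (v + u) (u + v + z - 1) =
      Pq (twostep (u + v) v v z) (v + z) (v + 2 * z - 1) ∧
    Pq (twostep (u + v) v v z) (v + z) (v + 2 * z - 1) =
      Pq (twostep (u + z) v u v) (2 * v) (2 * v + z - 1) :=
  twostep_reciprocity_chain_general u v z hv
end
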